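/- arXiv:1710.11478 — 2 statements merged into one kernel-verified Lean document; each statement's English description precedes it below -/
import Mathlib

section
/- Let B, S, C be entrywise nonnegative, let σ > 0, δ > 0, and set S⁺ = U_S(S; δ). Then G_S(S⁺, S; δ) ≤ G_S(S, S; δ) = J(B, S, C), and equality holds if and only if S satisfies the S-part KKT conditions. (Paper's Theorem 28.) -/
open Matrix Classical Filter

noncomputable section

/-- Squared Frobenius norm. -/
def frobSq {m n : ℕ} (X : Matrix (Fin m) (Fin n) ℝ) : ℝ := ∑ i, ∑ j, (X i j) ^ 2

/-- The BNMtF objective J(B,S,C). -/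
def objJ {M N P : ℕ} (A : Matrix (Fin M) (Fin N) ℝ) (α β : ℝ)
    (B : Matrix (Fin M) (Fin P) ℝ) (S : Matrix (Fin P) (Fin P) ℝ) (C : Matrix (Fin P) (Fin N) ℝ) : ℝ :=
  (1 / 2) * frobSq (A - B * S * C) + (α / 2) * frobSq (C * Cᵀ - 1) +
    (β / 2) * frobSq (Bᵀ * B - 1)

/-- ∇_B J. -/
def gradB {M N P : ℕ} (A : Matrix (Fin M) (Fin N) ℝ) (β : ℝ)
    (B : Matrix (Fin M) (Fin P) ℝ) (S : Matrix (Fin P) (Fin P) ℝ) (C : Matrix (Fin P) (Fin N) ℝ) : Matrix (Fin M) (Fin P) ℝ :=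
  B * S * C * Cᵀ * Sᵀ - A * Cᵀ * Sᵀ + β • (B * Bᵀ * B) - β • B

/-- ∇_C J. -/
def gradC {M N P : ℕ} (A : Matrix (Fin M) (Fin N) ℝ) (α : ℝ)
    (B : Matrix (Fin M) (Fin P) ℝ) (S : Matrix (Fin P) (Fin P) ℝ) (C : Matrix (Fin P) (Fin N) ℝ) : Matrix (Fin P) (Fin N) ℝ :=
  Sᵀ * Bᵀ * B * S * C - Sᵀ * Bᵀ * A + α • (C * Cᵀ * C) - α • C

/-- ∇_S J. -/
def gradS {M N P : ℕ} (A : Matrix (Fin M) (Fin N) ℝ)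
    (B : Matrix (Fin M) (Fin P) ℝ) (S : Matrix (Fin P) (Fin P) ℝ) (C : Matrix (Fin P) (Fin N) ℝ) : Matrix (Fin P) (Fin P) ℝ :=
  Bᵀ * B * S * C * Cᵀ - Bᵀ * A * Cᵀ

/-- B-part KKT conditions. -/
def KKTB {M N P : ℕ} (A : Matrix (Fin M) (Fin N) ℝ) (β : ℝ)
    (B : Matrix (Fin M) (Fin P) ℝ) (S : Matrix (Fin P) (Fin P) ℝ) (C : Matrix (Fin P) (Fin N) ℝ) : Prop :=
  ∀ m p, 0 ≤ gradB A β B S C m p ∧ gradB A β B S C m p * B m p = 0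

/-- C-part KKT conditions. -/
def KKTC {M N P : ℕ} (A : Matrix (Fin M) (Fin N) ℝ) (α : ℝ)
    (B : Matrix (Fin M) (Fin P) ℝ) (S : Matrix (Fin P) (Fin P) ℝ) (C : Matrix (Fin P) (Fin N) ℝ) : Prop :=
  ∀ q n, 0 ≤ gradC A α B S C q n ∧ gradC A α B S C q n * C q n = 0

/-- S-part KKT conditions. -/
def KKTS {M N P : ℕ} (A : Matrix (Fin M) (Fin N) ℝ)
    (B : Matrix (Fin M) (Fin P) ℝ) (S : Matrix (Fin P) (Fin P) ℝ) (C : Matrix (Fin P) (Fin N) ℝ) : Prop :=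
  ∀ p q, 0 ≤ gradS A B S C p q ∧ gradS A B S C p q * S p q = 0

/-- Full KKT conditions. -/
def KKT {M N P : ℕ} (A : Matrix (Fin M) (Fin N) ℝ) (α β : ℝ)
    (B : Matrix (Fin M) (Fin P) ℝ) (S : Matrix (Fin P) (Fin P) ℝ) (C : Matrix (Fin P) (Fin N) ℝ) : Prop :=
  KKTB A β B S C ∧ KKTS A B S C ∧ KKTC A α B S C

/-- B̄. -/
def Bbar {M N P : ℕ} (A : Matrix (Fin M) (Fin N) ℝ) (β σ : ℝ)
    (B : Matrix (Fin M) (Fin P) ℝ) (S : Matrix (Fin P) (Fin P) ℝ) (C : Matrix (Fin P) (Fin N) ℝ) : Matrix (Fin M) (Fin P) ℝ :=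
  Matrix.of fun m p => if 0 ≤ gradB A β B S C m p then B m p else max (B m p) σ

/-- Denominator matrix of the additive B-update. -/
def denomB {M N P : ℕ} (A : Matrix (Fin M) (Fin N) ℝ) (β σ : ℝ)
    (B : Matrix (Fin M) (Fin P) ℝ) (S : Matrix (Fin P) (Fin P) ℝ) (C : Matrix (Fin P) (Fin N) ℝ) : Matrix (Fin M) (Fin P) ℝ :=
  Bbar A β σ B S C * S * C * Cᵀ * Sᵀ +
    β • (Bbar A β σ B S C * (Bbar A β σ B S C)ᵀ * Bbar A β σ B S C)

/-- Additive B-update U_B(B; δ). -/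
def UB {M N P : ℕ} (A : Matrix (Fin M) (Fin N) ℝ) (β σ : ℝ)
    (B : Matrix (Fin M) (Fin P) ℝ) (S : Matrix (Fin P) (Fin P) ℝ) (C : Matrix (Fin P) (Fin N) ℝ) (δ : ℝ) : Matrix (Fin M) (Fin P) ℝ :=
  Matrix.of fun m p =>
    B m p - Bbar A β σ B S C m p * gradB A β B S C m p / (denomB A β σ B S C m p + δ)

/-- I_m : set of non-KKT indices in row m of B. -/
def IsetB {M N P : ℕ} (A : Matrix (Fin M) (Fin N) ℝ) (β : ℝ)
    (B : Matrix (Fin M) (Fin P) ℝ) (S : Matrix (Fin P) (Fin P) ℝ) (C : Matrix (Fin P) (Fin N) ℝ) (m : Fin M) : Set (Fin P) :=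
  {p | (0 < B m p ∧ gradB A β B S C m p ≠ 0) ∨ (B m p = 0 ∧ gradB A β B S C m p < 0)}

/-- Diagonal entries d^m_{pp}(δ). -/
def dB {M N P : ℕ} (A : Matrix (Fin M) (Fin N) ℝ) (β σ : ℝ)
    (B : Matrix (Fin M) (Fin P) ℝ) (S : Matrix (Fin P) (Fin P) ℝ) (C : Matrix (Fin P) (Fin N) ℝ) (δ : ℝ) (m : Fin M) (p : Fin P) : ℝ :=
  if p ∈ IsetB A β B S C m then (denomB A β σ B S C m p + δ) / Bbar A β σ B S C m p else 0

/-- Auxiliary function G_B(B′, B; δ). -/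
def GB {M N P : ℕ} (A : Matrix (Fin M) (Fin N) ℝ) (α β σ : ℝ)
    (B : Matrix (Fin M) (Fin P) ℝ) (S : Matrix (Fin P) (Fin P) ℝ) (C : Matrix (Fin P) (Fin N) ℝ) (B' : Matrix (Fin M) (Fin P) ℝ) (δ : ℝ) : ℝ :=
  objJ A α β B S C + (∑ m, ∑ p, (B' m p - B m p) * gradB A β B S C m p) +
    (1 / 2) * ∑ m, ∑ p, dB A β σ B S C δ m p * (B' m p - B m p) ^ 2

/-- C̄. -/
def Cbar {M N P : ℕ} (A : Matrix (Fin M) (Fin N) ℝ) (α σ : ℝ)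
    (B : Matrix (Fin M) (Fin P) ℝ) (S : Matrix (Fin P) (Fin P) ℝ) (C : Matrix (Fin P) (Fin N) ℝ) : Matrix (Fin P) (Fin N) ℝ :=
  Matrix.of fun q n => if 0 ≤ gradC A α B S C q n then C q n else max (C q n) σ

/-- Denominator matrix of the additive C-update. -/
def denomC {M N P : ℕ} (A : Matrix (Fin M) (Fin N) ℝ) (α σ : ℝ)
    (B : Matrix (Fin M) (Fin P) ℝ) (S : Matrix (Fin P) (Fin P) ℝ) (C : Matrix (Fin P) (Fin N) ℝ) : Matrix (Fin P) (Fin N) ℝ :=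
  Sᵀ * Bᵀ * B * S * Cbar A α σ B S C +
    α • (Cbar A α σ B S C * (Cbar A α σ B S C)ᵀ * Cbar A α σ B S C)

/-- Additive C-update U_C(C; δ). -/
def UC {M N P : ℕ} (A : Matrix (Fin M) (Fin N) ℝ) (α σ : ℝ)
    (B : Matrix (Fin M) (Fin P) ℝ) (S : Matrix (Fin P) (Fin P) ℝ) (C : Matrix (Fin P) (Fin N) ℝ) (δ : ℝ) : Matrix (Fin P) (Fin N) ℝ :=
  Matrix.of fun q n =>
    C q n - Cbar A α σ B S C q n * gradC A α B S C q n / (denomC A α σ B S C q n + δ)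

/-- S̄. -/
def Sbar {M N P : ℕ} (A : Matrix (Fin M) (Fin N) ℝ) (σ : ℝ)
    (B : Matrix (Fin M) (Fin P) ℝ) (S : Matrix (Fin P) (Fin P) ℝ) (C : Matrix (Fin P) (Fin N) ℝ) : Matrix (Fin P) (Fin P) ℝ :=
  Matrix.of fun p q => if 0 ≤ gradS A B S C p q then S p q else max (S p q) σ

/-- Denominator matrix of the additive S-update. -/
def denomS {M N P : ℕ} (A : Matrix (Fin M) (Fin N) ℝ) (σ : ℝ)
    (B : Matrix (Fin M) (Fin P) ℝ) (S : Matrix (Fin P) (Fin P) ℝ) (C : Matrix (Fin P) (Fin N) ℝ) : Matrix (Fin P) (Fin P) ℝ :=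
  Bᵀ * B * Sbar A σ B S C * C * Cᵀ

/-- Additive S-update U_S(S; δ). -/
def US {M N P : ℕ} (A : Matrix (Fin M) (Fin N) ℝ) (σ : ℝ)
    (B : Matrix (Fin M) (Fin P) ℝ) (S : Matrix (Fin P) (Fin P) ℝ) (C : Matrix (Fin P) (Fin N) ℝ) (δ : ℝ) : Matrix (Fin P) (Fin P) ℝ :=
  Matrix.of fun p q =>
    S p q - Sbar A σ B S C p q * gradS A B S C p q / (denomS A σ B S C p q + δ)

/-- I_q : set of non-KKT indices in column q of S. -/
def IsetS {M N P : ℕ} (A : Matrix (Fin M) (Fin N) ℝ)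
    (B : Matrix (Fin M) (Fin P) ℝ) (S : Matrix (Fin P) (Fin P) ℝ) (C : Matrix (Fin P) (Fin N) ℝ) (q : Fin P) : Set (Fin P) :=
  {p | (0 < S p q ∧ gradS A B S C p q ≠ 0) ∨ (S p q = 0 ∧ gradS A B S C p q < 0)}

/-- Diagonal entries d^q_{pp}(δ). -/
def dS {M N P : ℕ} (A : Matrix (Fin M) (Fin N) ℝ) (σ : ℝ)
    (B : Matrix (Fin M) (Fin P) ℝ) (S : Matrix (Fin P) (Fin P) ℝ) (C : Matrix (Fin P) (Fin N) ℝ) (δ : ℝ) (p q : Fin P) : ℝ :=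
  if p ∈ IsetS A B S C q then (denomS A σ B S C p q + δ) / Sbar A σ B S C p q else 0

/-- Auxiliary function G_S(S′, S; δ). -/
def GS {M N P : ℕ} (A : Matrix (Fin M) (Fin N) ℝ) (α β σ : ℝ)
    (B : Matrix (Fin M) (Fin P) ℝ) (S : Matrix (Fin P) (Fin P) ℝ) (C : Matrix (Fin P) (Fin N) ℝ) (S' : Matrix (Fin P) (Fin P) ℝ) (δ : ℝ) : ℝ :=
  objJ A α β B S C + (∑ p, ∑ q, (S' p q - S p q) * gradS A B S C p q) +
    (1 / 2) * ∑ q, ∑ p, dS A σ B S C δ p q * (S' p q - S p q) ^ 2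

lemma entry_mul_nonneg {a b c : ℕ} {X : Matrix (Fin a) (Fin b) ℝ} {Y : Matrix (Fin b) (Fin c) ℝ}
    (hX : ∀ i j, 0 ≤ X i j) (hY : ∀ i j, 0 ≤ Y i j) : ∀ i j, 0 ≤ (X * Y) i j := by
  intro i j
  rw [Matrix.mul_apply]
  exact Finset.sum_nonneg fun k _ => mul_nonneg (hX i k) (hY k j)

theorem stmt_5 {M N P : ℕ} (A : Matrix (Fin M) (Fin N) ℝ) (hA : ∀ i j, 0 ≤ A i j)
    (α β σ : ℝ) (hα : 0 < α) (hβ : 0 < β) (hσ : 0 < σ)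
    (B : Matrix (Fin M) (Fin P) ℝ) (S : Matrix (Fin P) (Fin P) ℝ) (C : Matrix (Fin P) (Fin N) ℝ)
    (hB : ∀ m p, 0 ≤ B m p) (hS : ∀ p q, 0 ≤ S p q) (hC : ∀ q n, 0 ≤ C q n)
    (δ : ℝ) (hδ : 0 < δ) :
    GS A α β σ B S C (US A σ B S C δ) δ ≤ GS A α β σ B S C S δ ∧
    GS A α β σ B S C S δ = objJ A α β B S C ∧
    (GS A α β σ B S C (US A σ B S C δ) δ = GS A α β σ B S C S δ ↔ KKTS A B S C) := by
  classical
  set G := gradS A B S C with hGdef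
  set Sb := Sbar A σ B S C with hSbdef
  have hSb : ∀ p q, 0 ≤ Sb p q := by
    intro p q
    simp only [hSbdef, Sbar, Matrix.of_apply]
    split
    · exact hS p q
    · exact le_max_of_le_right hσ.le
  have hden : ∀ p q, 0 < denomS A σ B S C p q + δ := by
    intro p q
    have h1 : ∀ i j, 0 ≤ (Bᵀ * B * Sb * C * Cᵀ) i j := by
      have hBt : ∀ i j, 0 ≤ (Bᵀ : Matrix (Fin P) (Fin M) ℝ) i j := fun i j => hB j i
      have hCt : ∀ i j, 0 ≤ (Cᵀ : Matrix (Fin N) (Fin P) ℝ) i j := fun i j => hC j i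
      exact entry_mul_nonneg (entry_mul_nonneg (entry_mul_nonneg (entry_mul_nonneg hBt hB) hSb) hC) hCt
    have := h1 p q
    simp only [denomS, ← hSbdef]
    linarith
  -- the per-entry difference term
  set T : Fin P → Fin P → ℝ := fun p q => US A σ B S C δ p q - S p q with hTdef
  have hT : ∀ p q, T p q = -(Sb p q * G p q / (denomS A σ B S C p q + δ)) := by
    intro p q
    simp only [hTdef, US, Matrix.of_apply, hSbdef, hGdef]
    ring
  set F : Fin P → Fin P → ℝ := fun p q => T p q * G p q + (1/2) * (dS A σ B S C δ p q * T p q ^ 2) with hFdef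
  have hFval : ∀ p q, F p q =
      if p ∈ IsetS A B S C q then -((1/2) * (Sb p q * G p q ^ 2 / (denomS A σ B S C p q + δ))) else 0 := by
    intro p q
    by_cases hI : p ∈ IsetS A B S C q
    · have hSbpos : 0 < Sb p q := by
        simp only [IsetS, Set.mem_setOf_eq] at hI
        rcases hI with ⟨hs, _⟩ | ⟨hs0, hg⟩
        · calc (0:ℝ) < S p q := hs
            _ ≤ Sb p q := by
              simp only [hSbdef, Sbar, Matrix.of_apply]
              split
              · exact le_refl _
              · exact le_max_left _ _
        · have : Sb p q = max (S p q) σ := by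
            simp only [hSbdef, Sbar, Matrix.of_apply, hGdef] at *
            rw [if_neg (not_le.mpr hg)]
          rw [this]
          exact lt_max_of_lt_right hσ
      have hd : dS A σ B S C δ p q = (denomS A σ B S C p q + δ) / Sb p q := by
        simp only [dS, if_pos hI, hSbdef]
      simp only [hFdef, hd, hT, if_pos hI]
      have h1 : (denomS A σ B S C p q + δ) ≠ 0 := (hden p q).ne'
      have h2 : Sb p q ≠ 0 := hSbpos.ne'
      field_simp
      ring
    · have hTz : Sb p q * G p q = 0 := by
        simp only [IsetS, Set.mem_setOf_eq, not_or, not_and_or, not_lt, not_ne_iff] at hI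
        obtain ⟨h1, h2⟩ := hI
        rcases h1 with h1 | h1
        · have hs0 : S p q = 0 := le_antisymm h1 (hS p q)
          rcases h2 with h2 | h2
          · exact absurd hs0 h2
          · have : Sb p q = S p q := by
              simp only [hSbdef, Sbar, Matrix.of_apply, hGdef]
              rw [if_pos h2]
            rw [this, hs0, zero_mul]
        · simp only [hGdef]
          rw [h1, mul_zero]
      have hT0 : T p q = 0 := by rw [hT, hTz]; simp
      simp only [hFdef, hT0, if_neg hI]
      ring
  have hFnonpos : ∀ p q, F p q ≤ 0 := by
    intro p q
    rw [hFval p q]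
    split
    · have : 0 ≤ (1/2 : ℝ) * (Sb p q * G p q ^ 2 / (denomS A σ B S C p q + δ)) := by
        apply mul_nonneg (by norm_num)
        apply div_nonneg (mul_nonneg (hSb p q) (sq_nonneg _)) (hden p q).le
      linarith
    · exact le_refl 0
  have hFzero : ∀ p q, F p q = 0 ↔ p ∉ IsetS A B S C q := by
    intro p q
    rw [hFval p q]
    by_cases hI : p ∈ IsetS A B S C q
    · rw [if_pos hI]
      constructor
      · intro h
        exfalso
        have hSbpos : 0 < Sb p q := by
          simp only [IsetS, Set.mem_setOf_eq] at hI
          rcases hI with ⟨hs, _⟩ | ⟨hs0, hg⟩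
          · calc (0:ℝ) < S p q := hs
              _ ≤ Sb p q := by
                simp only [hSbdef, Sbar, Matrix.of_apply]
                split
                · exact le_refl _
                · exact le_max_left _ _
          · have : Sb p q = max (S p q) σ := by
              simp only [hSbdef, Sbar, Matrix.of_apply, hGdef] at *
              rw [if_neg (not_le.mpr hg)]
            rw [this]
            exact lt_max_of_lt_right hσ
        have hGne : G p q ≠ 0 := by
          simp only [IsetS, Set.mem_setOf_eq, hGdef] at hI ⊢
          rcases hI with ⟨_, h⟩ | ⟨_, h⟩
          · exact h
          · exact h.ne
        have hpos : 0 < (1/2 : ℝ) * (Sb p q * G p q ^ 2 / (denomS A σ B S C p q + δ)) := by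
          apply mul_pos (by norm_num)
          exact div_pos (mul_pos hSbpos (lt_of_le_of_ne (sq_nonneg _) (Ne.symm (pow_ne_zero 2 hGne)))) (hden p q)
        linarith
      · intro h
        exact absurd hI h
    · rw [if_neg hI]
      exact ⟨fun _ => hI, fun _ => rfl⟩
  -- GS at S equals objJ
  have hGSS : GS A α β σ B S C S δ = objJ A α β B S C := by
    simp [GS]
  -- GS at US equals objJ + sum of F
  have hGSU : GS A α β σ B S C (US A σ B S C δ) δ = objJ A α β B S C + ∑ p, ∑ q, F p q := by
    simp only [GS, hFdef, hTdef, hGdef]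
    rw [Finset.mul_sum]
    have hcomm : ∑ q, (1/2 : ℝ) * ∑ p, dS A σ B S C δ p q * (US A σ B S C δ p q - S p q) ^ 2
        = ∑ p, ∑ q, (1/2 : ℝ) * (dS A σ B S C δ p q * (US A σ B S C δ p q - S p q) ^ 2) := by
      simp_rw [Finset.mul_sum]
      exact Finset.sum_comm
    rw [hcomm, add_assoc]
    congr 1
    rw [← Finset.sum_add_distrib]
    exact Finset.sum_congr rfl fun p _ => Finset.sum_add_distrib.symm
  have hsum_nonpos : ∑ p, ∑ q, F p q ≤ 0 :=
    Finset.sum_nonpos fun p _ => Finset.sum_nonpos fun q _ => hFnonpos p q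
  have hsum_zero_iff : (∑ p, ∑ q, F p q = 0) ↔ ∀ p q, F p q = 0 := by
    rw [Finset.sum_eq_zero_iff_of_nonpos (fun p _ => Finset.sum_nonpos fun q _ => hFnonpos p q)]
    constructor
    · intro h p q
      have := h p (Finset.mem_univ p)
      rw [Finset.sum_eq_zero_iff_of_nonpos (fun q _ => hFnonpos p q)] at this
      exact this q (Finset.mem_univ q)
    · intro h p _
      exact Finset.sum_eq_zero fun q _ => h p q
  have hKKT_iff : (∀ p q, p ∉ IsetS A B S C q) ↔ KKTS A B S C := by
    constructor
    · intro h p q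
      have hh := h p q
      simp only [IsetS, Set.mem_setOf_eq, not_or, not_and_or, not_lt, not_ne_iff] at hh
      obtain ⟨h1, h2⟩ := hh
      constructor
      · rcases h2 with h2 | h2
        · rcases h1 with h1 | h1
          · exact absurd (le_antisymm h1 (hS p q)) h2
          · rw [h1]
        · exact h2
      · rcases h1 with h1 | h1
        · rw [le_antisymm h1 (hS p q), mul_zero]
        · rw [h1, zero_mul]
    · intro hk p q
      obtain ⟨h1, h2⟩ := hk p q
      simp only [IsetS, Set.mem_setOf_eq, not_or, not_and_or, not_lt, not_ne_iff]
      constructor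
      · by_cases hs : 0 < S p q
        · right
          rcases mul_eq_zero.mp h2 with h | h
          · exact h
          · exact absurd h hs.ne'
        · left
          exact not_lt.mp hs
      · right
        exact h1
  refine ⟨?_, hGSS, ?_⟩
  · rw [hGSU, hGSS]
    linarith
  · rw [hGSU, hGSS]
    constructor
    · intro h
      have : ∑ p, ∑ q, F p q = 0 := by linarith
      rw [hsum_zero_iff] at this
      exact hKKT_iff.mp fun p q => (hFzero p q).mp (this p q)
    · intro hk
      have : ∀ p q, F p q = 0 := fun p q => (hFzero p q).mpr (hKKT_iff.mpr hk p q)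
      have hz : ∑ p, ∑ q, F p q = 0 := hsum_zero_iff.mpr this
      linarith
end
end

section
/- Let B, S, C be entrywise nonnegative and σ > 0, δ > 0. Then U_S(S; δ) = S if and only if S satisfies the S-part KKT conditions, i.e., for every (p,q): (∇_S J)_{pq} ≥ 0 and (∇_S J)_{pq}·s_{pq} = 0. -/
open Matrix Classical Filter

noncomputable section

/-! The update leaves s_{pq} unchanged exactly when s̄_{pq} (∇_S J)_{pq} vanishes, the
denominator being positive. Where the gradient is nonnegative, s̄_{pq} = s_{pq} and this is
complementary slackness; where it is negative, s̄_{pq} ≥ σ > 0, so the product cannot vanish. -/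

theorem Matrix.mul_apply_nonneg {l m n R : Type*} [Fintype m] [Semiring R] [PartialOrder R]
    [IsOrderedRing R] {X : Matrix l m R} {Y : Matrix m n R}
    (hX : ∀ i j, 0 ≤ X i j) (hY : ∀ i j, 0 ≤ Y i j) (i : l) (j : n) : 0 ≤ (X * Y) i j :=
  Finset.sum_nonneg fun k _ => mul_nonneg (hX i k) (hY k j)

section SUpdate

variable {M N P : ℕ} {A : Matrix (Fin M) (Fin N) ℝ} {σ : ℝ}
  {B : Matrix (Fin M) (Fin P) ℝ} {S : Matrix (Fin P) (Fin P) ℝ} {C : Matrix (Fin P) (Fin N) ℝ}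

theorem Sbar_apply_of_gradS_nonneg {p q : Fin P} (h : 0 ≤ gradS A B S C p q) :
    Sbar A σ B S C p q = S p q := by
  simp only [Sbar, Matrix.of_apply, if_pos h]

theorem Sbar_apply_of_gradS_neg {p q : Fin P} (h : gradS A B S C p q < 0) :
    Sbar A σ B S C p q = max (S p q) σ := by
  simp only [Sbar, Matrix.of_apply, if_neg h.not_ge]

theorem Sbar_nonneg (hS : ∀ p q, 0 ≤ S p q) (p q : Fin P) : 0 ≤ Sbar A σ B S C p q := by
  by_cases h : 0 ≤ gradS A B S C p q
  · rw [Sbar_apply_of_gradS_nonneg h]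
    exact hS p q
  · rw [Sbar_apply_of_gradS_neg (not_le.mp h)]
    exact le_max_of_le_left (hS p q)

theorem denomS_nonneg (hB : ∀ m p, 0 ≤ B m p) (hS : ∀ p q, 0 ≤ S p q)
    (hC : ∀ q n, 0 ≤ C q n) (p q : Fin P) : 0 ≤ denomS A σ B S C p q := by
  have hBt : ∀ p m, 0 ≤ Bᵀ p m := fun p m => hB m p
  have hCt : ∀ n q, 0 ≤ Cᵀ n q := fun n q => hC q n
  exact Matrix.mul_apply_nonneg (Matrix.mul_apply_nonneg (Matrix.mul_apply_nonneg
    (Matrix.mul_apply_nonneg hBt hB) (Sbar_nonneg hS)) hC) hCt p q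

theorem US_apply_eq_self_iff {δ : ℝ} {p q : Fin P} (hden : 0 < denomS A σ B S C p q + δ) :
    US A σ B S C δ p q = S p q ↔ Sbar A σ B S C p q * gradS A B S C p q = 0 := by
  simp only [US, Matrix.of_apply, sub_eq_self, div_eq_zero_iff, hden.ne', or_false]

theorem Sbar_mul_gradS_eq_zero_iff (hσ : 0 < σ) (p q : Fin P) :
    Sbar A σ B S C p q * gradS A B S C p q = 0 ↔
      0 ≤ gradS A B S C p q ∧ gradS A B S C p q * S p q = 0 := by
  by_cases hg : 0 ≤ gradS A B S C p q
  · rw [Sbar_apply_of_gradS_nonneg hg, mul_comm]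
    exact (and_iff_right hg).symm
  · have hneg := not_le.mp hg
    rw [Sbar_apply_of_gradS_neg hneg]
    have hSbar : 0 < max (S p q) σ := lt_max_of_lt_right hσ
    simp only [hg, false_and, iff_false]
    exact mul_ne_zero hSbar.ne' hneg.ne

end SUpdate

theorem stmt_13_general {M N P : ℕ} (A : Matrix (Fin M) (Fin N) ℝ)
    (σ : ℝ) (hσ : 0 < σ)
    (B : Matrix (Fin M) (Fin P) ℝ) (S : Matrix (Fin P) (Fin P) ℝ) (C : Matrix (Fin P) (Fin N) ℝ)
    (hB : ∀ m p, 0 ≤ B m p) (hS : ∀ p q, 0 ≤ S p q) (hC : ∀ q n, 0 ≤ C q n)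
    (δ : ℝ) (hδ : 0 < δ) :
    US A σ B S C δ = S ↔
      ∀ p q, 0 ≤ gradS A B S C p q ∧ gradS A B S C p q * S p q = 0 := by
  rw [← Matrix.ext_iff]
  refine forall₂_congr fun p q => ?_
  have hden : 0 < denomS A σ B S C p q + δ := by
    linarith [denomS_nonneg (A := A) (σ := σ) hB hS hC p q]
  rw [US_apply_eq_self_iff hden, Sbar_mul_gradS_eq_zero_iff hσ]

theorem stmt_13 {M N P : ℕ} (A : Matrix (Fin M) (Fin N) ℝ) (hA : ∀ i j, 0 ≤ A i j)
    (α β σ : ℝ) (hα : 0 < α) (hβ : 0 < β) (hσ : 0 < σ)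
    (B : Matrix (Fin M) (Fin P) ℝ) (S : Matrix (Fin P) (Fin P) ℝ) (C : Matrix (Fin P) (Fin N) ℝ)
    (hB : ∀ m p, 0 ≤ B m p) (hS : ∀ p q, 0 ≤ S p q) (hC : ∀ q n, 0 ≤ C q n)
    (δ : ℝ) (hδ : 0 < δ) :
    US A σ B S C δ = S ↔
      ∀ p q, 0 ≤ gradS A B S C p q ∧ gradS A B S C p q * S p q = 0 :=
  stmt_13_general A σ hσ B S C hB hS hC δ hδ
end
end
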